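/- arXiv:1106.5124 — 2 statements merged into one kernel-verified Lean document; each statement's English description precedes it below -/
import Mathlib

section
/- Let t : ℕ → ℕ → ℕ → ℕ and define f(n,i) to be the largest x ≤ i such that for all x' < x there exists y < i with t(x',y,n) = 0. Then for each n, the statement (∀ x, ∃ y, t(x,y,n) = 0) holds if and only if the function i ↦ f(n,i) is unbounded. -/
open Filter Topology
open scoped Classical

/-- `f t n i` is the largest `x ≤ i` such that `∀ x' < x, ∃ y < i, t x' y n = 0`. -/
noncomputable def f (t : ℕ → ℕ → ℕ → ℕ) (n i : ℕ) : ℕ :=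
  Nat.findGreatest (fun x => ∀ x' < x, ∃ y < i, t x' y n = 0) i

theorem exists_bound_forall_lt_exists_lt {P : ℕ → ℕ → Prop} (h : ∀ x, ∃ y, P x y) (k : ℕ) :
    ∃ N, ∀ x < k, ∃ y < N, P x y := by
  induction k with
  | zero => exact ⟨0, fun x hx => absurd hx x.not_lt_zero⟩
  | succ k ih =>
    obtain ⟨N, hN⟩ := ih
    obtain ⟨y₀, hy₀⟩ := h k
    refine ⟨max N (y₀ + 1), fun x hx => ?_⟩
    rcases Nat.lt_succ_iff_lt_or_eq.1 hx with hxk | rfl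
    · obtain ⟨y, hyN, hy⟩ := hN x hxk
      exact ⟨y, hyN.trans_le (le_max_left _ _), hy⟩
    · exact ⟨y₀, (Nat.lt_succ_self y₀).trans_le (le_max_right _ _), hy₀⟩

theorem le_f_iff {t : ℕ → ℕ → ℕ → ℕ} {n i k : ℕ} :
    k ≤ f t n i ↔ k ≤ i ∧ ∀ x < k, ∃ y < i, t x y n = 0 := by
  refine ⟨fun hk => ⟨hk.trans (Nat.findGreatest_le i), fun x hx => ?_⟩,
    fun ⟨hki, hk⟩ => Nat.le_findGreatest hki hk⟩
  have hf : ∀ x < f t n i, ∃ y < i, t x y n = 0 :=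
    Nat.findGreatest_spec (P := fun x => ∀ x' < x, ∃ y < i, t x' y n = 0) (Nat.zero_le i)
      (fun _ h => absurd h (Nat.not_lt_zero _))
  exact hf x (hx.trans_le hk)

/-- `∀ x, ∃ y, t x y n = 0` holds iff `i ↦ f t n i` is unbounded. -/
theorem stmt2 (t : ℕ → ℕ → ℕ → ℕ) (n : ℕ) :
    (∀ x, ∃ y, t x y n = 0) ↔ (∀ k, ∃ i, k < f t n i) := by
  constructor
  · intro h k
    obtain ⟨N, hN⟩ := exists_bound_forall_lt_exists_lt h (k + 1)
    refine ⟨max (k + 1) N, le_f_iff.2 ⟨le_max_left _ _, fun x hx => ?_⟩⟩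
    obtain ⟨y, hyN, hy⟩ := hN x hx
    exact ⟨y, hyN.trans_le (le_max_right _ _), hy⟩
  · intro h x
    obtain ⟨i, hi⟩ := h x
    obtain ⟨y, -, hy⟩ := (le_f_iff.1 hi).2 x (Nat.lt_succ_self x)
    exact ⟨y, hy⟩
end

section
/- Let t : ℕ → ℕ → ℕ → ℕ and f as above, and in ℓ² define y_{n,i} := e_{⟨n, f(n,i)⟩} where ⟨·,·⟩ is a pairing function on ℕ. If ∀x ∃y, t(x,y,n)=0, then the sequence (y_{n,i})_i converges weakly to 0 in ℓ². -/
open Filter Topology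
open scoped RealInnerProductSpace Classical

/-- The canonical orthonormal basis of ℓ². -/
noncomputable def E (n : ℕ) : lp (fun _ : ℕ => ℝ) 2 := lp.single 2 n (1 : ℝ)

/-- The sequence `y_{n,i} := e_{⟨n, f(n,i)⟩}` in ℓ². -/
noncomputable def Y (t : ℕ → ℕ → ℕ → ℕ) (n i : ℕ) : lp (fun _ : ℕ => ℝ) 2 :=
  E (Nat.pair n (f t n i))

/-! Each `x` eventually satisfies the predicate defining `f t n i`, so `f t n i → ∞` and with it the
index `⟨n, f t n i⟩`; pairing `z ∈ ℓ²` with `e_k` reads off the coordinate `z k`, which tends to `0`. -/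

open scoped ENNReal

theorem lp.tendsto_norm_cofinite_zero {ι : Type*} {G : ι → Type*} [∀ i, NormedAddCommGroup (G i)]
    {p : ℝ≥0∞} (hp : 0 < p.toReal) (z : lp G p) :
    Tendsto (fun i => ‖z i‖) cofinite (𝓝 0) := by
  have hpow : Tendsto (fun i => ‖z i‖ ^ p.toReal) cofinite (𝓝 0) :=
    ((lp.memℓp z).summable hp).tendsto_cofinite_zero
  have hroot := (Real.continuousAt_rpow_const 0 p.toReal⁻¹
    (Or.inr (inv_pos.2 hp).le)).tendsto.comp hpow
  rw [Real.zero_rpow (inv_ne_zero hp.ne')] at hroot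
  refine hroot.congr fun i => ?_
  simp only [Function.comp_apply, ← Real.rpow_mul (norm_nonneg _), mul_inv_cancel₀ hp.ne',
    Real.rpow_one]

theorem lp.tendsto_atTop_zero {V : Type*} [NormedAddCommGroup V] {p : ℝ≥0∞} (hp : 0 < p.toReal)
    (z : lp (fun _ : ℕ => V) p) : Tendsto (fun k => z k) atTop (𝓝 0) := by
  rw [tendsto_zero_iff_norm_tendsto_zero, ← Nat.cofinite_eq_atTop]
  exact lp.tendsto_norm_cofinite_zero hp z

theorem inner_E (z : lp (fun _ : ℕ => ℝ) 2) (k : ℕ) : ⟪z, E k⟫ = z k := by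
  simp [E, lp.inner_single_right]

theorem Nat.tendsto_findGreatest_atTop {P : ℕ → ℕ → Prop} [∀ i, DecidablePred (P i)]
    (hP : ∀ x, ∀ᶠ i in atTop, P i x) :
    Tendsto (fun i => Nat.findGreatest (P i) i) atTop atTop :=
  tendsto_atTop.2 fun x => (hP x).mp <| (eventually_ge_atTop x).mono fun _ hxi hPx =>
    Nat.le_findGreatest hxi hPx

theorem tendsto_f_atTop (t : ℕ → ℕ → ℕ → ℕ) (n : ℕ) (h : ∀ x, ∃ y, t x y n = 0) :
    Tendsto (f t n) atTop atTop := by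
  refine Nat.tendsto_findGreatest_atTop fun x => ?_
  refine (Set.finite_lt_nat x).eventually_all.2 fun x' _ => ?_
  obtain ⟨y, hy⟩ := h x'
  exact (eventually_gt_atTop y).mono fun _ hyi => ⟨y, hyi, hy⟩

/-- If `∀ x, ∃ y, t x y n = 0`, then `(y_{n,i})_i` converges weakly to `0` in ℓ². -/
theorem stmt3 (t : ℕ → ℕ → ℕ → ℕ) (n : ℕ) (h : ∀ x, ∃ y, t x y n = 0) :
    ∀ z : lp (fun _ : ℕ => ℝ) 2,
      Tendsto (fun i => ⟪z, Y t n i⟫) atTop (𝓝 0) := by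
  intro z
  have hpair : Tendsto (fun i => Nat.pair n (f t n i)) atTop atTop :=
    tendsto_atTop_mono (fun i => Nat.right_le_pair n _) (tendsto_f_atTop t n h)
  simpa only [Y, inner_E, Function.comp_def] using
    (lp.tendsto_atTop_zero (by norm_num) z).comp hpair
end
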